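/- arXiv:1303.7355 — 3 statements merged into one kernel-verified Lean document; each statement's English description precedes it below -/
import Mathlib

section
/- Let A be an algebra with mean value on ℝ^N. For μ ∈ Δ(A) and f ∈ A define T_μ f(x) = μ(τ_x f), where τ_x f = f(·+x). Then A is introverted (i.e. T_μ(A) ⊆ A for all μ ∈ Δ(A)) if and only if for every f ∈ A, the closure in the topology of pointwise convergence of the orbit {τ_a f : a ∈ ℝ^N} within BUC(ℝ^N) is contained in A. -/
open MeasureTheory Filter Topology
open scoped ENNReal NNReal

noncomputable section

abbrev RN (N : ℕ) := Fin N → ℝ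

/-- `f` is a bounded uniformly continuous function on `ℝ^N`. -/
def IsBUC {N : ℕ} (f : RN N → ℂ) : Prop :=
  Bornology.IsBounded (Set.range f) ∧ UniformContinuous f

/-- `f` has mean value `M`: the rescalings `x ↦ f (x/ε)` converge to the constant `M`
weakly-* in `L∞(ℝ^N)`, i.e. tested against every integrable function. -/
def HasMeanValue {N : ℕ} (f : RN N → ℂ) (M : ℂ) : Prop :=
  ∀ φ : RN N → ℂ, Integrable φ →
    Tendsto (fun ε : ℝ => ∫ x, f (ε⁻¹ • x) * φ x) (𝓝[>] (0:ℝ)) (𝓝 (M * ∫ x, φ x))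

/-- An algebra with mean value on `ℝ^N`: a closed (under uniform convergence)
subalgebra of BUC(ℝ^N) containing the constants, stable under complex conjugation,
translation invariant, all of whose elements possess a mean value. -/
structure MVAlgebra (N : ℕ) where
  carrier : Set (RN N → ℂ)
  buc : ∀ f ∈ carrier, IsBUC f
  const_mem : ∀ c : ℂ, (fun _ => c) ∈ carrier
  add_mem : ∀ f ∈ carrier, ∀ g ∈ carrier, f + g ∈ carrier
  mul_mem : ∀ f ∈ carrier, ∀ g ∈ carrier, f * g ∈ carrier
  smul_mem : ∀ (c : ℂ), ∀ f ∈ carrier, c • f ∈ carrier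
  conj_mem : ∀ f ∈ carrier, (fun x => (starRingEnd ℂ) (f x)) ∈ carrier
  translate_mem : ∀ f ∈ carrier, ∀ a : RN N, (fun x => f (x + a)) ∈ carrier
  closed : ∀ f : RN N → ℂ,
    (∀ ε : ℝ, 0 < ε → ∃ g ∈ carrier, ∀ x, ‖f x - g x‖ ≤ ε) → f ∈ carrier
  mean_value : ∀ f ∈ carrier, ∃ M : ℂ, HasMeanValue f M

/-- A character of `A`: a multiplicative linear functional on `A`, nonzero
(normalized by `μ 1 = 1`), automatically bounded, extended by zero off `A`.
The set of characters is the spectrum `Δ(A)`. -/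
def IsCharacter {N : ℕ} (A : MVAlgebra N) (μ : (RN N → ℂ) → ℂ) : Prop :=
  (∀ f ∈ A.carrier, ∀ g ∈ A.carrier, μ (f + g) = μ f + μ g) ∧
  (∀ (c : ℂ), ∀ f ∈ A.carrier, μ (c • f) = c * μ f) ∧
  (∀ f ∈ A.carrier, ∀ g ∈ A.carrier, μ (f * g) = μ f * μ g) ∧
  μ (fun _ => (1:ℂ)) = 1 ∧
  (∀ f, f ∉ A.carrier → μ f = 0) ∧
  (∀ f ∈ A.carrier, ∀ C : ℝ, (∀ x, ‖f x‖ ≤ C) → ‖μ f‖ ≤ C)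

/-- The spectrum `Δ(A)` of `A`, carrying the weak-* (pointwise convergence) topology. -/
abbrev Spectrum' {N : ℕ} (A : MVAlgebra N) :=
  {μ : (RN N → ℂ) → ℂ // IsCharacter A μ}

open Classical in
/-- The Dirac mass at `y`, as a functional (evaluation at `y` on `A`, zero off `A`). -/
def diracFun {N : ℕ} (A : MVAlgebra N) (y : RN N) : (RN N → ℂ) → ℂ :=
  fun f => if f ∈ A.carrier then f y else 0

/-- `A` is introverted: `T_μ f (x) = μ (τ_x f)` belongs to `A` for every
character `μ` and every `f ∈ A`. -/
def Introverted {N : ℕ} (A : MVAlgebra N) : Prop :=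
  ∀ μ : Spectrum' A, ∀ f ∈ A.carrier,
    (fun x => μ.1 (fun z => f (z + x))) ∈ A.carrier

/-- `mul` is the Arens product on `Δ(A)`: `(μν)(f) = μ (T_ν f)` where
`T_ν f (x) = ν (f (· + x))`. -/
def IsArensMul {N : ℕ} (A : MVAlgebra N)
    (mul : Spectrum' A → Spectrum' A → Spectrum' A) : Prop :=
  ∀ μ ν : Spectrum' A, ∀ f ∈ A.carrier,
    (mul μ ν).1 f = μ.1 (fun x => ν.1 (fun z => f (z + x)))

/-- The kernel `K(Δ(A)) = ⋂_{s} s·Δ(A)` of the semigroup `Δ(A)`. -/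
def kern {N : ℕ} {A : MVAlgebra N}
    (mul : Spectrum' A → Spectrum' A → Spectrum' A) : Set (Spectrum' A) :=
  ⋂ s : Spectrum' A, Set.range (mul s)

/-
(⇒) A point `g` of the pointwise closure of the orbit is the limit of `τ_a f` along some
ultrafilter `U` on `ℝ^N`. The limit along `U` of the Dirac masses `δ_a` is a character `μ`
with `T_μ f = g`, so `g ∈ A` by introversion.

(⇐) `T_μ f` is bounded and uniformly continuous because `μ` has norm `1`. It lies in the
pointwise closure of the orbit: if no translate `τ_a f` were `ε`-close to `T_μ f` on a finite
set `F`, then `h = ∑_{x ∈ F} |τ_x f - T_μ f (x)|²` would be an element of `A` with `h ≥ ε²`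
and `μ h = 0`, which a character of norm `1` does not allow.
-/

theorem exists_ultrafilter_tendsto_of_mem_closure_range {ι X : Type*} [TopologicalSpace X]
    {φ : ι → X} {x : X} (h : x ∈ closure (Set.range φ)) :
    ∃ U : Ultrafilter ι, Tendsto φ U (𝓝 x) := by
  rw [mem_closure_iff_clusterPt, ← Filter.map_top] at h
  obtain ⟨U, -, hU⟩ := mapClusterPt_iff_ultrafilter.1 h
  exact ⟨U, hU⟩

theorem mem_closure_of_forall_finite_dist_lt {ι α : Type*} [PseudoMetricSpace α] {g : ι → α}
    {s : Set (ι → α)}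
    (h : ∀ I : Set ι, I.Finite → ∀ ε > 0, ∃ u ∈ s, ∀ i ∈ I, dist (u i) (g i) < ε) :
    g ∈ closure s := by
  have hbasis : (𝓝 g).HasBasis (fun Iε : Set ι × ℝ => Iε.1.Finite ∧ 0 < Iε.2)
      fun Iε => Iε.1.pi fun i => Metric.ball (g i) Iε.2 := by
    rw [nhds_pi]
    refine Filter.hasBasis_pi_same_index (fun i => Metric.nhds_basis_ball) fun I k hI hk => ?_
    have hsmall : ∀ᶠ δ in 𝓝[>] (0 : ℝ), ∀ i ∈ I, δ < k i :=
      nhdsWithin_le_nhds (hI.eventually_all.2 fun i hi => gt_mem_nhds (hk i hi))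
    obtain ⟨k₀, hk₀, hk₀_pos⟩ := (hsmall.and self_mem_nhdsWithin).exists
    exact ⟨k₀, hk₀_pos, fun i hi => Metric.ball_subset_ball (hk₀ i hi).le⟩
  rw [mem_closure_iff_nhds_basis' hbasis]
  rintro ⟨I, ε⟩ ⟨hI, hε⟩
  obtain ⟨u, hu, hdist⟩ := h I hI ε hε
  exact ⟨u, fun i hi => hdist i hi, hu⟩

namespace MVAlgebra

variable {N : ℕ} (A : MVAlgebra N)

theorem sub_mem {f g : RN N → ℂ} (hf : f ∈ A.carrier) (hg : g ∈ A.carrier) :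
    f - g ∈ A.carrier := by
  simpa [sub_eq_add_neg] using A.add_mem f hf _ (A.smul_mem (-1) g hg)

theorem sum_mem {ι : Type*} (s : Finset ι) {g : ι → RN N → ℂ}
    (hg : ∀ i ∈ s, g i ∈ A.carrier) : ∑ i ∈ s, g i ∈ A.carrier := by
  classical
  induction s using Finset.induction_on with
  | empty => simpa [Pi.zero_def] using A.const_mem 0
  | insert a s ha ih =>
    rw [Finset.sum_insert ha]
    exact A.add_mem _ (hg a (Finset.mem_insert_self a s)) _
      (ih fun i hi => hg i (Finset.mem_insert_of_mem hi))

/-- `shift f a` and `charShift μ f` are the paper's `τ_a f` and `T_μ f`. -/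
def shift (f : RN N → ℂ) (a : RN N) : RN N → ℂ := fun x => f (x + a)

def charShift (μ : (RN N → ℂ) → ℂ) (f : RN N → ℂ) : RN N → ℂ := fun x => μ (shift f x)

theorem range_shift (f : RN N → ℂ) :
    Set.range (shift f) = {h | ∃ a : RN N, h = fun x => f (x + a)} :=
  Set.ext fun _ => exists_congr fun _ => eq_comm

end MVAlgebra

namespace IsCharacter

variable {N : ℕ} {A : MVAlgebra N} {μ : (RN N → ℂ) → ℂ}

theorem apply_const (hμ : IsCharacter A μ) (c : ℂ) : μ (fun _ => c) = c := by
  have := hμ.2.1 c _ (A.const_mem 1)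
  simp only [Pi.smul_def, smul_eq_mul, mul_one, hμ.2.2.2.1] at this
  exact this

theorem apply_sub (hμ : IsCharacter A μ) {f g : RN N → ℂ} (hf : f ∈ A.carrier)
    (hg : g ∈ A.carrier) : μ (f - g) = μ f - μ g := by
  have := hμ.1 _ (A.sub_mem hf hg) _ hg
  rw [sub_add_cancel] at this
  rw [this, add_sub_cancel_right]

theorem apply_sum (hμ : IsCharacter A μ) {ι : Type*} (s : Finset ι) {g : ι → RN N → ℂ}
    (hg : ∀ i ∈ s, g i ∈ A.carrier) : μ (∑ i ∈ s, g i) = ∑ i ∈ s, μ (g i) := by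
  classical
  induction s using Finset.induction_on with
  | empty => simpa [Pi.zero_def] using hμ.apply_const 0
  | insert a s ha ih =>
    have hs : ∀ i ∈ s, g i ∈ A.carrier := fun i hi => hg i (Finset.mem_insert_of_mem hi)
    rw [Finset.sum_insert ha, Finset.sum_insert ha,
      hμ.1 _ (hg a (Finset.mem_insert_self a s)) _ (A.sum_mem s hs), ih hs]

theorem dist_apply_le (hμ : IsCharacter A μ) {f g : RN N → ℂ} (hf : f ∈ A.carrier)
    (hg : g ∈ A.carrier) {C : ℝ} (h : ∀ x, dist (f x) (g x) ≤ C) : dist (μ f) (μ g) ≤ C := by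
  rw [dist_eq_norm, ← hμ.apply_sub hf hg]
  exact hμ.2.2.2.2.2 _ (A.sub_mem hf hg) C fun x => by simpa [dist_eq_norm] using h x

theorem apply_ne_zero_of_le (hμ : IsCharacter A μ) {h : RN N → ℝ}
    (hh : (fun x => (h x : ℂ)) ∈ A.carrier) {δ : ℝ} (hδ : 0 < δ) (hle : ∀ x, δ ≤ h x) :
    μ (fun x => (h x : ℂ)) ≠ 0 := by
  obtain ⟨K, hK⟩ := isBounded_iff_forall_norm_le.1 (A.buc _ hh).1
  have hhK : ∀ x, h x ≤ K := fun x => by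
    have := hK _ (Set.mem_range_self x)
    rw [Complex.norm_real, Real.norm_eq_abs] at this
    exact (le_abs_self _).trans this
  -- `K - h` takes values in `[0, K - δ]`, so `‖K - μ h‖ ≤ K - δ < K`.
  have hdist : dist (K : ℂ) (μ fun x => (h x : ℂ)) ≤ K - δ := by
    rw [← hμ.apply_const (K : ℂ)]
    refine hμ.dist_apply_le (A.const_mem _) hh fun x => ?_
    rw [Complex.isometry_ofReal.dist_eq, Real.dist_eq, abs_of_nonneg (sub_nonneg.2 (hhK x))]
    linarith [hle x]
  intro h0
  rw [h0, dist_zero_right, Complex.norm_real, Real.norm_eq_abs] at hdist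
  linarith [le_abs_self K]

end IsCharacter

namespace IsCharacter

open MVAlgebra

variable {N : ℕ} {A : MVAlgebra N} {μ : (RN N → ℂ) → ℂ} {f : RN N → ℂ}

theorem isBUC_charShift (hμ : IsCharacter A μ) (hf : f ∈ A.carrier) : IsBUC (charShift μ f) := by
  obtain ⟨C, hC⟩ := isBounded_iff_forall_norm_le.1 (A.buc f hf).1
  refine ⟨isBounded_iff_forall_norm_le.2 ⟨C, ?_⟩, Metric.uniformContinuous_iff.2 fun ε hε => ?_⟩
  · rintro _ ⟨x, rfl⟩
    exact hμ.2.2.2.2.2 _ (A.translate_mem f hf x) C fun z => hC _ (Set.mem_range_self _)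
  · obtain ⟨δ, hδ, hfδ⟩ := Metric.uniformContinuous_iff.1 (A.buc f hf).2 (ε / 2) (half_pos hε)
    refine ⟨δ, hδ, fun x y hxy => ?_⟩
    calc dist (charShift μ f x) (charShift μ f y) ≤ ε / 2 :=
          hμ.dist_apply_le (A.translate_mem f hf x) (A.translate_mem f hf y) fun z =>
            (hfδ (by rwa [dist_add_left])).le
      _ < ε := half_lt_self hε

theorem exists_shift_dist_lt (hμ : IsCharacter A μ) (hf : f ∈ A.carrier) (F : Finset (RN N))
    {ε : ℝ} (hε : 0 < ε) : ∃ a, ∀ x ∈ F, dist (shift f a x) (charShift μ f x) < ε := by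
  by_contra! hfar
  set u : RN N → RN N → ℂ := fun x => shift f x - fun _ => charShift μ f x
  have hu : ∀ x, u x ∈ A.carrier := fun x => A.sub_mem (A.translate_mem f hf x) (A.const_mem _)
  have hμu : ∀ x, μ (u x) = 0 := fun x => by
    rw [hμ.apply_sub (f := shift f x) (A.translate_mem f hf x) (A.const_mem _), hμ.apply_const,
      charShift, sub_self]
  set h : RN N → ℝ := fun a => ∑ x ∈ F, ‖u x a‖ ^ 2
  have h_eq : (fun a => (h a : ℂ)) = ∑ x ∈ F, u x * fun a => starRingEnd ℂ (u x a) := by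
    ext a
    simp [h, Finset.sum_apply, Complex.mul_conj']
  have hmem : (fun a => (h a : ℂ)) ∈ A.carrier :=
    h_eq ▸ A.sum_mem F fun x _ => A.mul_mem _ (hu x) _ (A.conj_mem _ (hu x))
  have hμh : μ (fun a => (h a : ℂ)) = 0 := by
    rw [h_eq, hμ.apply_sum F fun x _ => A.mul_mem _ (hu x) _ (A.conj_mem _ (hu x))]
    exact Finset.sum_eq_zero fun x _ => by
      rw [hμ.2.2.1 _ (hu x) _ (A.conj_mem _ (hu x)), hμu x, zero_mul]
  have hle : ∀ a, ε ^ 2 ≤ h a := fun a => by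
    obtain ⟨x, hx, hxa⟩ := hfar a
    have hux : ε ≤ ‖u x a‖ := by simpa [u, shift, charShift, dist_eq_norm, add_comm] using hxa
    calc ε ^ 2 ≤ ‖u x a‖ ^ 2 := pow_le_pow_left₀ hε.le hux 2
      _ ≤ h a := Finset.single_le_sum (f := fun x => ‖u x a‖ ^ 2) (fun _ _ => by positivity) hx
  exact hμ.apply_ne_zero_of_le hmem (pow_pos hε 2) hle hμh

theorem charShift_mem_closure (hμ : IsCharacter A μ) (hf : f ∈ A.carrier) :
    charShift μ f ∈ closure (Set.range (shift f)) :=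
  mem_closure_of_forall_finite_dist_lt fun I hI ε hε => by
    obtain ⟨a, ha⟩ := hμ.exists_shift_dist_lt hf hI.toFinset hε
    exact ⟨shift f a, Set.mem_range_self a, fun x hx => ha x (hI.mem_toFinset.2 hx)⟩

end IsCharacter

namespace MVAlgebra

variable {N : ℕ} (A : MVAlgebra N) (U : Ultrafilter (RN N))

open Classical in
def ultrafilterChar : (RN N → ℂ) → ℂ :=
  fun u => if u ∈ A.carrier then limUnder (U : Filter (RN N)) u else 0

variable {A} in
theorem tendsto_ultrafilterChar {u : RN N → ℂ} (hu : u ∈ A.carrier) :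
    Tendsto u U (𝓝 (A.ultrafilterChar U u)) := by
  rw [ultrafilterChar, if_pos hu]
  obtain ⟨L, -, hL⟩ := (A.buc u hu).1.isCompact_closure.ultrafilter_le_nhds (U.map u)
    (le_principal_iff.2 <| Ultrafilter.mem_map.2 <|
      univ_mem' fun a => subset_closure (Set.mem_range_self a))
  exact tendsto_nhds_limUnder ⟨L, hL⟩

theorem isCharacter_ultrafilterChar : IsCharacter A (A.ultrafilterChar U) := by
  have hlim := fun u (hu : u ∈ A.carrier) => tendsto_ultrafilterChar U hu
  refine ⟨fun f hf g hg => ?_, fun c f hf => ?_, fun f hf g hg => ?_, ?_, fun f hf => if_neg hf,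
    fun f hf C hC => le_of_tendsto' (hlim f hf).norm hC⟩
  · exact tendsto_nhds_unique (hlim _ (A.add_mem f hf g hg)) ((hlim f hf).add (hlim g hg))
  · exact tendsto_nhds_unique (hlim _ (A.smul_mem c f hf)) ((hlim f hf).const_mul c)
  · exact tendsto_nhds_unique (hlim _ (A.mul_mem f hf g hg)) ((hlim f hf).mul (hlim g hg))
  · exact tendsto_nhds_unique (hlim _ (A.const_mem 1)) tendsto_const_nhds

variable {A U} in
theorem charShift_ultrafilterChar {f g : RN N → ℂ} (hf : f ∈ A.carrier)
    (hfg : Tendsto (shift f) U (𝓝 g)) : charShift (A.ultrafilterChar U) f = g := by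
  funext x
  refine tendsto_nhds_unique (tendsto_ultrafilterChar U (A.translate_mem f hf x)) ?_
  exact (tendsto_pi_nhds.1 hfg x).congr fun a => congrArg f (add_comm x a)

end MVAlgebra

/-- `A` is introverted if and only if for every `f ∈ A` the closure,
in the topology of pointwise convergence, of the orbit `{τ_a f : a ∈ ℝ^N}` within
`BUC(ℝ^N)` is contained in `A`. -/
theorem stmt1 {N : ℕ} (A : MVAlgebra N) :
    Introverted A ↔
      ∀ f ∈ A.carrier, ∀ g : RN N → ℂ, IsBUC g →
        g ∈ closure {h : RN N → ℂ | ∃ a : RN N, h = fun x => f (x + a)} →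
        g ∈ A.carrier := by
  constructor
  · intro hA f hf g _ hg
    rw [← MVAlgebra.range_shift] at hg
    obtain ⟨U, hU⟩ := exists_ultrafilter_tendsto_of_mem_closure_range hg
    rw [← MVAlgebra.charShift_ultrafilterChar hf hU]
    exact hA ⟨_, A.isCharacter_ultrafilterChar U⟩ f hf
  · intro hA μ f hf
    refine hA f hf _ (μ.2.isBUC_charShift hf) ?_
    rw [← MVAlgebra.range_shift]
    exact μ.2.charShift_mem_closure hf
end
end

section
/- Let A be an introverted algebra with mean value on ℝ^N, so that Δ(A) is a compact topological semigroup under the Arens product. If the multiplication on Δ(A) is jointly continuous, then every element of Δ(A) is invertible, and Δ(A) is a compact topological group. -/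
open MeasureTheory Filter Topology
open scoped ENNReal NNReal

noncomputable section

/-!
The Dirac masses form a dense subgroup of `Δ(A)`, since `δ_y δ_{-y} = δ_0`. Density is Gelfand's
argument: if a character `μ` stayed `δ`-far from every `δ_y` on finitely many `f_i ∈ A`, then
`g = ∑ |f_i - μ f_i|² / δ_i²` would satisfy `g ≥ 1`, hence be invertible in `A` (approximate `1/t`
by polynomials on the range of `g` and use that `A` is uniformly closed), while `μ g = 0`.

In a compact Hausdorff monoid with jointly continuous multiplication the units are closed, being
the projection of the closed set `{(a, b) | ab = ba = 1}`. So every element of `Δ(A)` is a unit,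
and inversion is continuous because its graph `{(a, b) | ab = 1}` is closed and `Δ(A)` is compact.
-/

theorem continuous_of_isClosed_graph {X Y : Type*} [TopologicalSpace X] [TopologicalSpace Y]
    [CompactSpace Y] {f : X → Y} (hf : IsClosed {p : X × Y | p.2 = f p.1}) : Continuous f := by
  refine continuous_iff_isClosed.2 fun C hC => ?_
  have : f ⁻¹' C = Prod.fst '' ({p : X × Y | p.2 = f p.1} ∩ Prod.snd ⁻¹' C) := by
    ext x; simp
  rw [this]
  exact isClosedMap_fst_of_compactSpace _ (hf.inter (hC.preimage continuous_snd))

section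

variable {M : Type*} [Monoid M] [TopologicalSpace M] [ContinuousMul M] [T2Space M]
  [CompactSpace M]

theorem isClosed_setOf_isUnit : IsClosed {x : M | IsUnit x} := by
  have : {x : M | IsUnit x} = Prod.fst '' {p : M × M | p.1 * p.2 = 1 ∧ p.2 * p.1 = 1} := by
    ext x; simp [isUnit_iff_exists]
  rw [this]
  exact isClosedMap_fst_of_compactSpace _ <|
    (isClosed_eq continuous_mul continuous_const).inter
      (isClosed_eq (continuous_snd.mul continuous_fst) continuous_const)

theorem continuous_isUnit_inv (h : ∀ x : M, IsUnit x) :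
    Continuous fun x => (↑(h x).unit⁻¹ : M) := by
  refine continuous_of_isClosed_graph ?_
  have : {p : M × M | p.2 = ↑(h p.1).unit⁻¹} = {p | p.1 * p.2 = 1} := by
    ext ⟨x, y⟩
    conv_rhs => rw [← (h x).unit_spec]
    exact (Units.mul_eq_one_iff_inv_eq.trans eq_comm).symm
  rw [this]
  exact isClosed_eq continuous_mul continuous_const

end

namespace MVAlgebra

variable {N : ℕ} (A : MVAlgebra N)

def toStarSubalgebra : StarSubalgebra ℂ (RN N → ℂ) where
  carrier := A.carrier
  mul_mem' ha hb := A.mul_mem _ ha _ hb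
  add_mem' ha hb := A.add_mem _ ha _ hb
  algebraMap_mem' := A.const_mem
  star_mem' ha := A.conj_mem _ ha

variable {A}

theorem isCharacter_diracFun (y : RN N) : IsCharacter A (diracFun A y) := by
  classical
  refine ⟨fun f hf g hg => ?_, fun c f hf => ?_, fun f hf g hg => ?_, ?_, fun f hf => ?_,
    fun f hf C hC => ?_⟩ <;>
    simp_all [diracFun, A.add_mem, A.smul_mem, A.mul_mem, A.const_mem]

variable (A) in
def dirac (y : RN N) : Spectrum' A := ⟨diracFun A y, isCharacter_diracFun y⟩

theorem dirac_mul_dirac {mul : Spectrum' A → Spectrum' A → Spectrum' A} (hmul : IsArensMul A mul)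
    (y y' : RN N) : mul (dirac A y) (dirac A y') = dirac A (y + y') := by
  ext f
  by_cases hf : f ∈ A.carrier
  · simp [hmul _ _ f hf, dirac, diracFun, hf, A.translate_mem f hf, add_comm y']
  · simp [(mul _ _).2.2.2.2.2.1 f hf, dirac, diracFun, hf]

theorem isClosed_setOf_isCharacter : IsClosed {μ : (RN N → ℂ) → ℂ | IsCharacter A μ} := by
  simp only [IsCharacter, Set.ofPred_and, Set.ofPred_forall]
  repeat' first
    | refine .inter ?_ ?_
    | refine isClosed_iInter fun _ => ?_
    | exact isClosed_eq (by fun_prop) (by fun_prop)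
    | exact isClosed_le (by fun_prop) (by fun_prop)

theorem exists_forall_isCharacter_norm_le (f : RN N → ℂ) :
    ∃ C, ∀ μ, IsCharacter A μ → ‖μ f‖ ≤ C := by
  by_cases hf : f ∈ A.carrier
  · obtain ⟨C, hC⟩ := isBounded_iff_forall_norm_le.1 (A.buc f hf).1
    exact ⟨C, fun μ hμ => hμ.2.2.2.2.2 f hf C fun x => hC _ (Set.mem_range_self x)⟩
  · exact ⟨0, fun μ hμ => by simp [hμ.2.2.2.2.1 f hf]⟩

instance : CompactSpace (Spectrum' A) := by
  choose C hC using exists_forall_isCharacter_norm_le (A := A)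
  refine isCompact_iff_compactSpace.1 <|
    (isCompact_univ_pi fun f => isCompact_closedBall (0 : ℂ) (C f)).of_isClosed_subset
      isClosed_setOf_isCharacter fun μ hμ f _ => ?_
  simpa using hC f μ hμ

theorem ofReal_polynomial_eval_mem {G : RN N → ℝ} (hG : (fun x => (G x : ℂ)) ∈ A.carrier)
    (p : Polynomial ℝ) : (fun x => ((p.eval (G x) : ℝ) : ℂ)) ∈ A.carrier := by
  induction p using Polynomial.induction_on' with
  | add p q hp hq =>
    convert A.add_mem _ hp _ hq using 1
    ext x
    simp
  | monomial n a =>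
    have hpow : (fun x => (G x : ℂ)) ^ n ∈ A.toStarSubalgebra := pow_mem hG n
    convert A.smul_mem (a : ℂ) _ hpow using 1
    ext x
    simp

theorem ofReal_inv_mem {G : RN N → ℝ} (hG : (fun x => (G x : ℂ)) ∈ A.carrier) {ε : ℝ}
    (hε : 0 < ε) (hGε : ∀ x, ε ≤ G x) : (fun x => ((G x)⁻¹ : ℂ)) ∈ A.carrier := by
  obtain ⟨C, hC⟩ := isBounded_iff_forall_norm_le.1 (A.buc _ hG).1
  have hG_mem : ∀ x, G x ∈ Set.Icc ε C := fun x =>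
    ⟨hGε x, (le_abs_self _).trans <| by simpa using hC _ (Set.mem_range_self x)⟩
  have hinv : ContinuousOn (fun t : ℝ => t⁻¹) (Set.Icc ε C) :=
    continuousOn_inv₀.mono fun t ht => (hε.trans_le ht.1).ne'
  refine A.closed _ fun δ hδ => ?_
  obtain ⟨p, hp⟩ := exists_polynomial_near_of_continuousOn ε C _ hinv δ hδ
  refine ⟨_, ofReal_polynomial_eval_mem hG p, fun x => ?_⟩
  rw [← Complex.ofReal_inv, ← Complex.ofReal_sub, Complex.norm_real, Real.norm_eq_abs, abs_sub_comm]
  exact (hp _ (hG_mem x)).le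

theorem isUnit_of_coe_eq_ofReal {s : A.toStarSubalgebra} {G : RN N → ℝ}
    (hsG : ∀ x, (s : RN N → ℂ) x = G x) {ε : ℝ} (hε : 0 < ε) (hGε : ∀ x, ε ≤ G x) :
    IsUnit s := by
  have hG : (fun x => (G x : ℂ)) ∈ A.carrier := funext (fun x => (hsG x).symm) ▸ s.2
  refine .of_mul_eq_one ⟨_, ofReal_inv_mem hG hε hGε⟩ (Subtype.ext (funext fun x => ?_))
  have : (G x : ℂ) ≠ 0 := Complex.ofReal_ne_zero.2 (hε.trans_le (hGε x)).ne'
  simp [hsG x, this]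

def _root_.IsCharacter.toAlgHom {μ : (RN N → ℂ) → ℂ} (hμ : IsCharacter A μ) :
    A.toStarSubalgebra →ₐ[ℂ] ℂ where
  toFun f := μ f
  map_one' := hμ.2.2.2.1
  map_mul' f g := hμ.2.2.1 f f.2 g g.2
  map_zero' := by simpa using hμ.2.1 0 0 (A.const_mem 0)
  map_add' f g := hμ.1 f f.2 g g.2
  commutes' c := by
    convert hμ.2.1 c _ (A.const_mem 1) using 1
    · congr 1; ext; simp
    · simp [hμ.2.2.2.1]

theorem _root_.IsCharacter.exists_diracFun_near {μ : (RN N → ℂ) → ℂ} (hμ : IsCharacter A μ)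
    {I : Set (RN N → ℂ)} (hI : I.Finite) {δ : (RN N → ℂ) → ℝ} (hδ : ∀ f ∈ I, 0 < δ f) :
    ∃ y, ∀ f ∈ I, dist (diracFun A y f) (μ f) < δ f := by
  classical
  by_contra! hfar
  set φ := hμ.toAlgHom
  set J : Finset A.toStarSubalgebra := hI.toFinset.subtype (· ∈ A.toStarSubalgebra)
  let d : A.toStarSubalgebra → A.toStarSubalgebra := fun f => f - algebraMap ℂ _ (φ f)
  let g : A.toStarSubalgebra := ∑ f ∈ J, ((δ f)⁻¹ ^ 2 : ℂ) • (star (d f) * d f)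
  have hφg : φ g = 0 := by simp [g, d]
  set G : RN N → ℝ := fun x => ∑ f ∈ J, (δ f)⁻¹ ^ 2 * ‖(f : RN N → ℂ) x - μ f‖ ^ 2
  have hgG : ∀ x, (g : RN N → ℂ) x = G x := by
    intro x
    simp only [g, d, G, AddSubmonoidClass.coe_finsetSum, Finset.sum_apply, Complex.ofReal_sum]
    refine Finset.sum_congr rfl fun f _ => ?_
    change (((δ f)⁻¹ : ℝ) : ℂ) ^ 2 * (star ((f : RN N → ℂ) x - μ f) * ((f : RN N → ℂ) x - μ f)) = _
    rw [Complex.star_def, Complex.conj_mul']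
    push_cast
    ring
  have hG : ∀ x, 1 ≤ G x := by
    intro x
    obtain ⟨f, hfI, hf⟩ := hfar x
    have hfA : f ∈ A.carrier := by
      by_contra hfA
      simp only [diracFun, if_neg hfA, hμ.2.2.2.2.1 f hfA, dist_self] at hf
      linarith [hδ f hfI]
    rw [diracFun, if_pos hfA, dist_eq_norm] at hf
    have hf' : 1 ≤ ((δ f)⁻¹ * ‖f x - μ f‖) ^ 2 :=
      one_le_pow₀ ((le_inv_mul_iff₀ (hδ f hfI)).2 (by rwa [mul_one]))
    rw [mul_pow] at hf'
    exact hf'.trans (Finset.single_le_sum (f := fun f : A.toStarSubalgebra =>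
      (δ f)⁻¹ ^ 2 * ‖(f : RN N → ℂ) x - μ f‖ ^ 2) (fun _ _ => by positivity)
      (Finset.mem_subtype.2 (hI.mem_toFinset.2 hfI) : (⟨f, hfA⟩ : A.toStarSubalgebra) ∈ J))
  simpa [hφg] using (isUnit_of_coe_eq_ofReal hgG one_pos hG).map φ

theorem denseRange_dirac : DenseRange (dirac A) := by
  intro μ
  have hbasis := (hasBasis_pi fun f => Metric.nhds_basis_ball (x := μ.1 f)).comap
    (Subtype.val : Spectrum' A → _)
  rw [← nhds_pi, ← nhds_induced] at hbasis
  refine (mem_closure_iff_nhds_basis hbasis).2 fun ⟨I, δ⟩ ⟨hI, hδ⟩ => ?_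
  obtain ⟨y, hy⟩ := μ.2.exists_diracFun_near hI hδ
  exact ⟨dirac A y, Set.mem_range_self y, fun f hf => hy f hf⟩

end MVAlgebra

theorem stmt4_general {N : ℕ} (A : MVAlgebra N)
    (mul : Spectrum' A → Spectrum' A → Spectrum' A) (hmul : IsArensMul A mul)
    (hassoc : ∀ μ ν ρ : Spectrum' A, mul (mul μ ν) ρ = mul μ (mul ν ρ))
    (e : Spectrum' A) (he : e.1 = diracFun A 0)
    (hid : ∀ μ, mul e μ = μ ∧ mul μ e = μ)
    (hjoint : Continuous fun p : Spectrum' A × Spectrum' A => mul p.1 p.2) :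
    (∀ μ : Spectrum' A, ∃ ν, mul μ ν = e ∧ mul ν μ = e) ∧
    ∃ inv : Spectrum' A → Spectrum' A, Continuous inv ∧
      ∀ μ, mul μ (inv μ) = e ∧ mul (inv μ) μ = e := by
  let _ : Monoid (Spectrum' A) :=
    { mul, one := e, mul_assoc := hassoc, one_mul := fun μ => (hid μ).1,
      mul_one := fun μ => (hid μ).2 }
  have : ContinuousMul (Spectrum' A) := ⟨hjoint⟩
  have hone : MVAlgebra.dirac A 0 = 1 := (Subtype.ext he).symm
  have hdirac (y : RN N) : IsUnit (MVAlgebra.dirac A y) :=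
    isUnit_iff_exists.2 ⟨MVAlgebra.dirac A (-y),
      (MVAlgebra.dirac_mul_dirac hmul y (-y)).trans (by rw [add_neg_cancel, hone]),
      (MVAlgebra.dirac_mul_dirac hmul (-y) y).trans (by rw [neg_add_cancel, hone])⟩
  have hunit (μ : Spectrum' A) : IsUnit μ :=
    isClosed_setOf_isUnit.closure_subset_iff.2 (Set.range_subset_iff.2 hdirac)
      (MVAlgebra.denseRange_dirac μ)
  exact ⟨fun μ => isUnit_iff_exists.1 (hunit μ), fun μ => ↑(hunit μ).unit⁻¹,
    continuous_isUnit_inv hunit, fun μ => ⟨(hunit μ).mul_val_inv, (hunit μ).val_inv_mul⟩⟩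

/-- Let `A` be introverted, so that `Δ(A)` is a compact topological
semigroup under the Arens product, with identity the Dirac mass at `0`. If the
multiplication is jointly continuous, every element of `Δ(A)` is invertible and
`Δ(A)` is a compact topological group (inversion is continuous). -/
theorem stmt4 {N : ℕ} (A : MVAlgebra N) (hA : Introverted A)
    (mul : Spectrum' A → Spectrum' A → Spectrum' A) (hmul : IsArensMul A mul)
    (hassoc : ∀ μ ν ρ : Spectrum' A, mul (mul μ ν) ρ = mul μ (mul ν ρ))
    (e : Spectrum' A) (he : e.1 = diracFun A 0)
    (hid : ∀ μ, mul e μ = μ ∧ mul μ e = μ)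
    (hjoint : Continuous fun p : Spectrum' A × Spectrum' A => mul p.1 p.2) :
    (∀ μ : Spectrum' A, ∃ ν, mul μ ν = e ∧ mul ν μ = e) ∧
    ∃ inv : Spectrum' A → Spectrum' A, Continuous inv ∧
      ∀ μ, mul μ (inv μ) = e ∧ mul (inv μ) μ = e :=
  stmt4_general A mul hmul hassoc e he hid hjoint
end
end

section
/- A compact Hausdorff semigroup with separately continuous multiplication which is algebraically a group and has jointly continuous multiplication is a topological group (inversion is continuous). -/
/-!
The graph of inversion is the zero set `{(s, t) | s t = e}` of the jointly continuous
multiplication, hence closed. A map into a compact space with closed graph is continuous: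
the preimage of a closed set `C` is the projection of the closed set `graph ∩ (univ ×ˢ C)`,
and projecting away a compact factor is a closed map.
-/

open Set

theorem continuous_of_isClosed_graph_of_compactSpace {X Y : Type*} [TopologicalSpace X]
    [TopologicalSpace Y] [CompactSpace Y] {f : X → Y}
    (hf : IsClosed {p : X × Y | f p.1 = p.2}) : Continuous f := by
  refine continuous_iff_isClosed.2 fun C hC => ?_
  have hpre : f ⁻¹' C = Prod.fst '' ({p : X × Y | f p.1 = p.2} ∩ univ ×ˢ C) := by
    ext x
    simp
  rw [hpre]
  exact isClosedMap_fst_of_compactSpace _ (hf.inter (isClosed_univ.prod hC))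

theorem eq_inv_of_mul_eq {S : Type*} (mul : S → S → S)
    (hassoc : ∀ a b c, mul (mul a b) c = mul a (mul b c))
    (e : S) (hid : ∀ s, mul e s = s ∧ mul s e = s)
    (inv : S → S) (hinv : ∀ s, mul (inv s) s = e) {x y : S} (h : mul x y = e) :
    y = inv x :=
  calc y = mul e y := (hid y).1.symm
    _ = mul (mul (inv x) x) y := by rw [hinv x]
    _ = mul (inv x) (mul x y) := hassoc _ _ _
    _ = inv x := by rw [h, (hid (inv x)).2]

theorem stmt5_general {S : Type*} [TopologicalSpace S] [CompactSpace S] [T2Space S]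
    (mul : S → S → S)
    (hassoc : ∀ a b c, mul (mul a b) c = mul a (mul b c))
    (e : S) (hid : ∀ s, mul e s = s ∧ mul s e = s)
    (inv : S → S) (hinv : ∀ s, mul s (inv s) = e ∧ mul (inv s) s = e)
    (hjoint : Continuous fun p : S × S => mul p.1 p.2) :
    Continuous inv := by
  have hgraph : {p : S × S | inv p.1 = p.2} = {p | mul p.1 p.2 = e} := by
    ext ⟨x, y⟩
    constructor
    · rintro (rfl : inv x = y)
      exact (hinv x).1
    · intro h
      exact (eq_inv_of_mul_eq mul hassoc e hid inv (fun s => (hinv s).2) h).symm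
  apply continuous_of_isClosed_graph_of_compactSpace
  rw [hgraph]
  exact isClosed_singleton.preimage hjoint

/-- A compact Hausdorff semigroup with separately continuous
multiplication which is algebraically a group and whose multiplication is jointly
continuous is a topological group: inversion is continuous. -/
theorem stmt5 {S : Type*} [TopologicalSpace S] [CompactSpace S] [T2Space S]
    (mul : S → S → S)
    (hsep₁ : ∀ s, Continuous fun t => mul s t)
    (hsep₂ : ∀ s, Continuous fun t => mul t s)
    (hassoc : ∀ a b c, mul (mul a b) c = mul a (mul b c))
    (e : S) (hid : ∀ s, mul e s = s ∧ mul s e = s)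
    (inv : S → S) (hinv : ∀ s, mul s (inv s) = e ∧ mul (inv s) s = e)
    (hjoint : Continuous fun p : S × S => mul p.1 p.2) :
    Continuous inv :=
  stmt5_general mul hassoc e hid inv hinv hjoint
end
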